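/- The infimal convolution of the Vapnik loss v_ε(x) = max(|x| − ε, 0) with the quadratic (1/(2κ))x² equals the 'hubnik' loss: it vanishes on [−ε, ε], is quadratic on ε ≤ |x| ≤ ε + κ, and grows linearly with slope 1 for |x| > ε + κ; in particular it is convex and C¹. -/

import Mathlib

/-- Infimal convolution of two scalar functions. -/
noncomputable def infConv (f g : ℝ → ℝ) (x : ℝ) : ℝ := ⨅ y : ℝ, f y + g (x - y)

/-- The scalar Vapnik (ε-insensitive) loss. -/
noncomputable def vapnik (ε : ℝ) (x : ℝ) : ℝ := max (|x| - ε) 0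

/-- The hubnik loss, explicit form. -/
noncomputable def hub (ε κ x : ℝ) : ℝ :=
  if |x| ≤ ε then 0 else if |x| ≤ ε + κ then (|x| - ε) ^ 2 / (2 * κ) else |x| - ε - κ / 2

/-- Candidate derivative of the hubnik loss. -/
noncomputable def hubD (ε κ x : ℝ) : ℝ :=
  (min (max (x - ε) 0) κ - min (max (-x - ε) 0) κ) / κ

lemma vapnik_nonneg (ε x : ℝ) : 0 ≤ vapnik ε x := le_max_right _ _

lemma hub_even (ε κ x : ℝ) : hub ε κ (-x) = hub ε κ x := by simp [hub, abs_neg]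

lemma hubD_neg (ε κ x : ℝ) : hubD ε κ (-x) = - hubD ε κ x := by
  simp only [hubD, neg_neg]
  ring

/-- Uniform lower bound. -/
lemma hub_lb {ε κ : ℝ} (hε : 0 < ε) (hκ : 0 < κ) (x y : ℝ) :
    hub ε κ x ≤ vapnik ε y + (x - y) ^ 2 / (2 * κ) := by
  have ha0 : 0 ≤ vapnik ε y := vapnik_nonneg ε y
  have ha1 : |y| - ε ≤ vapnik ε y := le_max_left _ _
  have hb : |x| - ε ≤ vapnik ε y + |x - y| := by
    have := abs_sub_abs_le_abs_sub x y
    linarith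
  have hb0 : (0:ℝ) ≤ |x - y| := abs_nonneg _
  have hb2 : |x - y| ^ 2 = (x - y) ^ 2 := sq_abs _
  have h2κ : (0:ℝ) < 2 * κ := by linarith
  unfold hub
  split_ifs with h1 h2
  · have : (0:ℝ) ≤ (x - y) ^ 2 / (2 * κ) := by positivity
    linarith
  · push_neg at h1
    set a := vapnik ε y
    set b := |x - y|
    have key : (|x| - ε) ^ 2 ≤ 2 * κ * a + b ^ 2 := by
      nlinarith [mul_nonneg (show (0:ℝ) ≤ κ - (|x| - ε) by linarith) ha0,
        mul_nonneg (show (0:ℝ) ≤ |x| - ε by linarith)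
          (show (0:ℝ) ≤ a - ((|x| - ε) - b) by linarith),
        sq_nonneg ((|x| - ε) - b)]
    rw [div_le_iff₀ h2κ]
    have : (a + b ^ 2 / (2 * κ)) * (2 * κ) = 2 * κ * a + b ^ 2 := by
      field_simp
    rw [← hb2, this]; exact key
  · push_neg at h1 h2
    set a := vapnik ε y
    set b := |x - y|
    have key : 2 * κ * (|x| - ε - κ / 2) ≤ 2 * κ * a + b ^ 2 := by
      nlinarith [sq_nonneg (b - κ),
        mul_nonneg (show (0:ℝ) ≤ a - ((|x| - ε) - b) by linarith) hκ.le]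
    rw [← sub_le_iff_le_add', le_div_iff₀ h2κ]
    nlinarith [key]

lemma inf_eq {ε κ : ℝ} (hε : 0 < ε) (hκ : 0 < κ) (x : ℝ) :
    infConv (vapnik ε) (fun t => t ^ 2 / (2 * κ)) x = hub ε κ x := by
  have hbdd : BddBelow (Set.range fun y => vapnik ε y + (x - y) ^ 2 / (2 * κ)) := by
    refine ⟨0, ?_⟩
    rintro _ ⟨y, rfl⟩
    have h1 := vapnik_nonneg ε y
    have h2 : (0:ℝ) ≤ (x - y) ^ 2 / (2 * κ) := by positivity
    simpa using add_nonneg h1 h2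
  have hwit : ∃ y₀ : ℝ, vapnik ε y₀ + (x - y₀) ^ 2 / (2 * κ) = hub ε κ x := by
    unfold hub
    split_ifs with h1 h2
    · exact ⟨x, by simp [vapnik, max_eq_right (by linarith : |x| - ε ≤ 0)]⟩
    · push_neg at h1
      rcases le_or_gt 0 x with hx | hx
      · refine ⟨ε, ?_⟩
        rw [show vapnik ε ε = 0 by simp [vapnik, abs_of_pos hε],
          abs_of_nonneg hx]
        ring
      · refine ⟨-ε, ?_⟩
        rw [show vapnik ε (-ε) = 0 by simp [vapnik, abs_of_pos hε],
          abs_of_neg hx]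
        ring_nf
    · push_neg at h1 h2
      rcases le_or_gt 0 x with hx | hx
      · rw [abs_of_nonneg hx] at h2 ⊢
        refine ⟨x - κ, ?_⟩
        have hxκ : 0 < x - κ - ε := by linarith
        rw [show vapnik ε (x - κ) = x - κ - ε by
          unfold vapnik
          rw [abs_of_pos (by linarith : (0:ℝ) < x - κ), max_eq_left (by linarith)]]
        field_simp
        ring
      · rw [abs_of_neg hx] at h2 ⊢
        refine ⟨x + κ, ?_⟩
        have hxκ : x + κ < -ε := by linarith
        rw [show vapnik ε (x + κ) = -(x + κ) - ε by
          unfold vapnik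
          rw [abs_of_neg (by linarith : x + κ < 0), max_eq_left (by linarith)]]
        field_simp
        ring
  obtain ⟨y₀, hy₀⟩ := hwit
  refine le_antisymm ?_ (le_ciInf fun y => hub_lb hε hκ x y)
  calc infConv (vapnik ε) (fun t => t ^ 2 / (2 * κ)) x
      ≤ vapnik ε y₀ + (x - y₀) ^ 2 / (2 * κ) := ciInf_le hbdd y₀
    _ = hub ε κ x := hy₀

lemma sq_div_hasDerivAt {κ : ℝ} (hκ : 0 < κ) (c x : ℝ) :
    HasDerivAt (fun y => (y - c) ^ 2 / (2 * κ)) ((x - c) / κ) x := by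
  have h := (((hasDerivAt_id x).sub_const c).pow 2).div_const (2 * κ)
  refine h.congr_deriv ?_
  norm_num
  field_simp

lemma hub_hasDerivAt {ε κ : ℝ} (hε : 0 < ε) (hκ : 0 < κ) (x : ℝ) :
    HasDerivAt (hub ε κ) (hubD ε κ x) x := by
  have main : ∀ z : ℝ, 0 ≤ z → HasDerivAt (hub ε κ) (hubD ε κ z) z := by
    intro z hz
    rcases lt_or_ge z ε with h1 | h1
    · -- flat part
      have hD : hubD ε κ z = 0 := by
        rw [hubD, max_eq_right (by linarith : z - ε ≤ 0),
          max_eq_right (by linarith : -z - ε ≤ 0), min_eq_left hκ.le]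
        simp
      rw [hD]
      apply (hasDerivAt_const z (0:ℝ)).congr_of_eventuallyEq
      filter_upwards [Ioo_mem_nhds (show -ε < z by linarith) h1] with y hy
      exact if_pos (abs_le.mpr ⟨hy.1.le, hy.2.le⟩)
    rcases h1.eq_or_lt with heq | h1'
    · -- z = ε
      subst heq
      have hD : hubD ε κ ε = 0 := by
        rw [hubD, sub_self, max_eq_left le_rfl, min_eq_left hκ.le,
          max_eq_right (by linarith : -ε - ε ≤ 0), min_eq_left hκ.le]
        simp
      rw [hD]
      have hl : HasDerivWithinAt (hub ε κ) 0 (Set.Iic ε) ε := by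
        refine ((hasDerivAt_const ε (0:ℝ)).hasDerivWithinAt).congr_of_eventuallyEq ?_ ?_
        · filter_upwards [inter_mem_nhdsWithin (Set.Iic ε)
            (Ioo_mem_nhds (show -ε < ε by linarith) (lt_add_one ε))] with y hy
          exact if_pos (abs_le.mpr ⟨hy.2.1.le, hy.1⟩)
        · exact if_pos (by rw [abs_of_pos hε])
      have hr : HasDerivWithinAt (hub ε κ) 0 (Set.Ici ε) ε := by
        have h0 : HasDerivAt (fun y => (y - ε) ^ 2 / (2 * κ)) 0 ε := by
          have := sq_div_hasDerivAt hκ ε ε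
          rwa [sub_self, zero_div] at this
        refine h0.hasDerivWithinAt.congr_of_eventuallyEq ?_ ?_
        · filter_upwards [inter_mem_nhdsWithin (Set.Ici ε)
            (Iio_mem_nhds (show ε < ε + κ by linarith))] with y hy
          have hy1 : ε ≤ y := hy.1
          have hy2 : y < ε + κ := hy.2
          have hay : |y| = y := abs_of_nonneg (by linarith)
          simp only [hub, hay]
          split_ifs with ha hb
          · have hye : y = ε := le_antisymm ha hy1
            subst hye; simp
          · rfl
          · exact absurd (by linarith : y ≤ ε + κ) hb
        · simp [hub, abs_of_pos hε]
      have hu := hl.union hr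
      rw [Set.Iic_union_Ici] at hu
      exact hasDerivWithinAt_univ.mp hu
    rcases lt_or_ge z (ε + κ) with h2 | h2
    · -- quadratic interior
      have hD : hubD ε κ z = (z - ε) / κ := by
        rw [hubD, max_eq_left (by linarith : (0:ℝ) ≤ z - ε),
          min_eq_left (by linarith : z - ε ≤ κ),
          max_eq_right (by linarith : -z - ε ≤ 0), min_eq_left hκ.le]
        ring
      rw [hD]
      apply (sq_div_hasDerivAt hκ ε z).congr_of_eventuallyEq
      filter_upwards [Ioo_mem_nhds h1' h2] with y hy
      have hay : |y| = y := abs_of_nonneg (by linarith [hy.1])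
      simp only [hub, hay]
      rw [if_neg (by push_neg; exact hy.1), if_pos hy.2.le]
    rcases h2.eq_or_lt with heq | h2'
    · -- z = ε + κ
      subst heq
      have hD : hubD ε κ (ε + κ) = 1 := by
        rw [hubD, max_eq_left (by linarith : (0:ℝ) ≤ ε + κ - ε),
          min_eq_right (by linarith : κ ≤ ε + κ - ε),
          max_eq_right (by linarith : -(ε + κ) - ε ≤ 0), min_eq_left hκ.le]
        field_simp
        simp
      rw [hD]
      have habz : |ε + κ| = ε + κ := abs_of_nonneg (by linarith)
      have hl : HasDerivWithinAt (hub ε κ) 1 (Set.Iic (ε + κ)) (ε + κ) := by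
        have h0 : HasDerivAt (fun y => (y - ε) ^ 2 / (2 * κ)) 1 (ε + κ) := by
          have := sq_div_hasDerivAt hκ ε (ε + κ)
          rwa [add_sub_cancel_left, div_self hκ.ne'] at this
        refine h0.hasDerivWithinAt.congr_of_eventuallyEq ?_ ?_
        · filter_upwards [inter_mem_nhdsWithin (Set.Iic (ε + κ))
            (Ioi_mem_nhds (show ε < ε + κ by linarith))] with y hy
          have hy1 : y ≤ ε + κ := hy.1
          have hy2 : ε < y := hy.2
          have hay : |y| = y := abs_of_nonneg (by linarith)
          simp only [hub, hay]
          rw [if_neg (by push_neg; exact hy2), if_pos hy1]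
        · simp only [hub, habz]
          rw [if_neg (by push_neg; linarith), if_pos le_rfl]
      have hr : HasDerivWithinAt (hub ε κ) 1 (Set.Ici (ε + κ)) (ε + κ) := by
        have h0 : HasDerivAt (fun y : ℝ => y - ε - κ / 2) 1 (ε + κ) :=
          ((hasDerivAt_id (ε + κ)).sub_const ε).sub_const (κ / 2)
        refine h0.hasDerivWithinAt.congr_of_eventuallyEq ?_ ?_
        · filter_upwards [self_mem_nhdsWithin] with y hy
          have hyz : ε + κ ≤ y := hy
          have hay : |y| = y := abs_of_nonneg (by linarith)
          simp only [hub, hay]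
          rcases eq_or_lt_of_le hyz with hye | hlt
          · rw [← hye, if_neg (by push_neg; linarith), if_pos le_rfl,
              add_sub_cancel_left]
            field_simp
            ring
          · rw [if_neg (by push_neg; linarith), if_neg (by push_neg; linarith)]
        · simp only [hub, habz]
          rw [if_neg (by push_neg; linarith), if_pos le_rfl, add_sub_cancel_left]
          field_simp
          ring
      have hu := hl.union hr
      rw [Set.Iic_union_Ici] at hu
      exact hasDerivWithinAt_univ.mp hu
    · -- linear interior
      have hD : hubD ε κ z = 1 := by
        rw [hubD, max_eq_left (by linarith : (0:ℝ) ≤ z - ε),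
          min_eq_right (by linarith : κ ≤ z - ε),
          max_eq_right (by linarith : -z - ε ≤ 0), min_eq_left hκ.le]
        field_simp
        simp
      rw [hD]
      have h0 : HasDerivAt (fun y : ℝ => y - ε - κ / 2) 1 z :=
        ((hasDerivAt_id z).sub_const ε).sub_const (κ / 2)
      apply h0.congr_of_eventuallyEq
      filter_upwards [Ioi_mem_nhds h2'] with y hy
      have hay : |y| = y := abs_of_nonneg (by linarith [show ε + κ < y from hy])
      simp only [hub, hay]
      rw [if_neg (by push_neg; linarith [show ε + κ < y from hy]),
        if_neg (by push_neg; exact hy)]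
  rcases le_or_gt 0 x with hx | hx
  · exact main x hx
  · have h1 := main (-x) (by linarith)
    have h2 : HasDerivAt (fun y : ℝ => hub ε κ (-y)) (hubD ε κ (-x) * (-1)) x :=
      h1.comp x (hasDerivAt_neg x)
    simp only [hub_even] at h2
    have heq : hubD ε κ (-x) * (-1) = hubD ε κ x := by rw [hubD_neg]; ring
    rwa [heq] at h2

/-- The infimal convolution of the Vapnik loss with the quadratic `x²/(2κ)` (the
"hubnik" loss) vanishes on `[−ε, ε]`, is quadratic on `ε ≤ |x| ≤ ε + κ`, grows
linearly with slope 1 beyond `ε + κ`, and is convex and `C¹`. -/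
theorem stmt_8 (ε κ : ℝ) (hε : 0 < ε) (hκ : 0 < κ) :
    (∀ x : ℝ, |x| ≤ ε → infConv (vapnik ε) (fun t => t ^ 2 / (2 * κ)) x = 0) ∧
    (∀ x : ℝ, ε ≤ |x| → |x| ≤ ε + κ →
      infConv (vapnik ε) (fun t => t ^ 2 / (2 * κ)) x = (|x| - ε) ^ 2 / (2 * κ)) ∧
    (∀ x : ℝ, ε + κ < |x| →
      infConv (vapnik ε) (fun t => t ^ 2 / (2 * κ)) x = |x| - ε - κ / 2) ∧
    ConvexOn ℝ Set.univ (infConv (vapnik ε) (fun t => t ^ 2 / (2 * κ))) ∧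
    ContDiff ℝ 1 (infConv (vapnik ε) (fun t => t ^ 2 / (2 * κ))) := by
  refine ⟨?_, ?_, ?_, ?_, ?_⟩
  · intro x hx
    rw [inf_eq hε hκ x, hub, if_pos hx]
  · intro x hx1 hx2
    rw [inf_eq hε hκ x]
    unfold hub
    rcases le_or_gt (|x|) ε with h1 | h1
    · rw [if_pos h1]
      have hxe : |x| = ε := le_antisymm h1 hx1
      rw [hxe]; ring
    · rw [if_neg (not_le.mpr h1), if_pos hx2]
  · intro x hx
    rw [inf_eq hε hκ x]
    unfold hub
    rw [if_neg (by push_neg; linarith), if_neg (by push_neg; linarith)]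
  · -- convexity
    have hfun : infConv (vapnik ε) (fun t => t ^ 2 / (2 * κ)) = hub ε κ :=
      funext (inf_eq hε hκ)
    rw [hfun]
    have hdiff : Differentiable ℝ (hub ε κ) :=
      fun y => (hub_hasDerivAt hε hκ y).differentiableAt
    have hderiv : deriv (hub ε κ) = hubD ε κ :=
      funext fun y => (hub_hasDerivAt hε hκ y).deriv
    apply Monotone.convexOn_univ_of_deriv hdiff
    rw [hderiv]
    intro a b hab
    rw [hubD, hubD, div_le_div_iff_of_pos_right hκ]
    have hm1 : min (max (a - ε) 0) κ ≤ min (max (b - ε) 0) κ := by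
      gcongr <;> linarith
    have hm2 : min (max (-b - ε) 0) κ ≤ min (max (-a - ε) 0) κ := by
      gcongr <;> linarith
    linarith
  · -- C¹
    have hfun : infConv (vapnik ε) (fun t => t ^ 2 / (2 * κ)) = hub ε κ :=
      funext (inf_eq hε hκ)
    rw [hfun, contDiff_one_iff_deriv]
    refine ⟨fun y => (hub_hasDerivAt hε hκ y).differentiableAt, ?_⟩
    have hderiv : deriv (hub ε κ) = hubD ε κ :=
      funext fun y => (hub_hasDerivAt hε hκ y).deriv
    rw [hderiv]
    unfold hubD
    fun_prop
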